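/- arXiv:1312.5248 — 5 statements merged into one kernel-verified Lean document; each statement's English description precedes it below -/
import Mathlib

section
/- For every integer n ≥ 66 that is divisible by 66, there exists a K4-free simple graph G on n vertices with exactly n²/4 + 1 edges such that f(G) ≤ 2n²/33 − 7n/33. -/
/-!
The graph is a blow-up of a 7-vertex `K₄`-free graph `H` (the triangle `012` with `1` joined to
`3, 4`, `2` joined to `5, 6`, and the edges `36, 45, 46`), its classes having sizes
`4k+5, 16k+16, 16k+16, k, 14k+15, 1, 15k+13` where `n = 66(k+1)`; these make the number of edges
`1089(k+1)² + 1 = n²/4 + 1`. A blow-up of a `K₄`-free graph is `K₄`-free, and a nonadjacent pair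
`uv` of it is `K₄`-saturating only if the images of `u` and `v` are nonadjacent in `H` with an
edge of `H` in their common neighbourhood. In `H` this forces `u` and `v` into the same class
`0`, `1` or `2`, so `f(G) ≤ C(4k+5, 2) + 2 C(16k+16, 2) = 2n²/33 - 7n/33`.
-/

open SimpleGraph

/-- `{u, v}` is a `K₄`-saturating edge of `G`: `u ≠ v`, `u` and `v` are nonadjacent, and
adding the edge `uv` to `G` creates a copy of `K₄`. -/
def SatEdge {V : Type*} (G : SimpleGraph V) (u v : V) : Prop :=
  u ≠ v ∧ ¬ G.Adj u v ∧ ¬ (G ⊔ SimpleGraph.fromEdgeSet {s(u, v)}).CliqueFree 4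

/-- `f G`: the number of `K₄`-saturating edges of `G`. -/
noncomputable def satCount {V : Type*} (G : SimpleGraph V) : ℕ :=
  {e : Sym2 V | ∃ u v, e = s(u, v) ∧ SatEdge G u v}.ncard

open Finset

namespace SimpleGraph

variable {V W : Type*}

theorem CliqueFree.of_hom {G : SimpleGraph V} {H : SimpleGraph W} {n : ℕ} (f : G →g H)
    (h : H.CliqueFree n) : G.CliqueFree n := by
  contrapose! h
  rw [not_cliqueFree_iff_top_isContained] at h ⊢
  obtain ⟨c⟩ := h
  exact ⟨⟨f.comp c.toHom, Hom.injective_of_top_hom _⟩⟩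

theorem two_mul_card_edgeFinset_comap [Fintype V] [Fintype W] [DecidableEq W]
    (H : SimpleGraph W) [DecidableRel H.Adj] (φ : V → W) :
    2 * #(H.comap φ).edgeFinset =
      ∑ a, ∑ b, if H.Adj a b then #{x | φ x = a} * #{x | φ x = b} else 0 := by
  rw [two_mul_card_edgeFinset, card_eq_sum_card_fiberwise (t := univ)
    (f := fun p : V × V => (φ p.1, φ p.2)) fun _ _ => mem_univ _, ← Fintype.sum_prod_type']
  refine sum_congr rfl fun ⟨a, b⟩ _ => ?_
  split_ifs with hab
  · rw [← card_product]
    congr 1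
    ext ⟨x, y⟩
    simp only [mem_filter, mem_univ, true_and, mem_product, Prod.mk.injEq, comap_adj]
    constructor
    · exact fun h => h.2
    · rintro ⟨rfl, rfl⟩
      exact ⟨hab, rfl, rfl⟩
  · rw [card_eq_zero, filter_eq_empty_iff]
    rintro ⟨x, y⟩ hxy ⟨rfl, rfl⟩
    exact hab (mem_filter.1 hxy).2

end SimpleGraph

theorem exists_card_fiber_eq {W : Type*} [Fintype W] [DecidableEq W] (s : W → ℕ) {n : ℕ}
    (hn : ∑ w, s w = n) : ∃ φ : Fin n → W, ∀ w, #{x | φ x = w} = s w := by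
  let e : (Σ w, Fin (s w)) ≃ Fin n := Fintype.equivFinOfCardEq (by simp [hn])
  refine ⟨fun x => (e.symm x).1, fun w => ?_⟩
  calc #{x | (e.symm x).1 = w} = #{y : Σ w, Fin (s w) | y.1 = w} := card_equiv e.symm (by simp)
    _ = s w := by rw [card_filter, Fintype.sum_sigma]; simp [apply_ite]

section SatEdge

variable {V W : Type*}

theorem SatEdge.exists_adj_of_cliqueFree {G : SimpleGraph V} {u v : V} (hG : G.CliqueFree 4)
    (h : SatEdge G u v) : ∃ x y, G.Adj x y ∧ G.Adj u x ∧ G.Adj u y ∧ G.Adj v x ∧ G.Adj v y := by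
  classical
  obtain ⟨huv, -, hK⟩ := h
  obtain ⟨t, ht⟩ : ∃ t, (G ⊔ fromEdgeSet {s(u, v)}).IsNClique 4 t := by
    simpa [CliqueFree] using hK
  replace ht : (G ⊔ edge u v).IsNClique 4 t := ht
  have htv : (G ⊔ edge v u).IsNClique 4 t := edge_comm u v ▸ ht
  have hu : u ∈ t := hG.mem_of_sup_edge_isNClique ht
  have hv : v ∈ t := hG.mem_of_sup_edge_isNClique htv
  have hcu : G.IsClique (t.erase u : Set V) := (ht.erase_of_sup_edge_of_mem hu).isClique
  have hcv : G.IsClique (t.erase v : Set V) := (htv.erase_of_sup_edge_of_mem hv).isClique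
  have hcard : #((t.erase u).erase v) = 2 := by
    rw [card_erase_of_mem (mem_erase.2 ⟨huv.symm, hv⟩), card_erase_of_mem hu, ht.card_eq]
  obtain ⟨x, y, hxy, hrest⟩ := card_eq_two.1 hcard
  have hx : x ∈ (t.erase u).erase v := hrest ▸ by simp
  have hy : y ∈ (t.erase u).erase v := hrest ▸ by simp
  simp only [mem_erase] at hx hy
  refine ⟨x, y, hcu ?_ ?_ hxy, hcv ?_ ?_ (Ne.symm hx.2.1), hcv ?_ ?_ (Ne.symm hy.2.1),
    hcu ?_ ?_ (Ne.symm hx.1), hcu ?_ ?_ (Ne.symm hy.1)⟩ <;> simp [*, Ne.symm huv]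

theorem satCount_le_sum_choose [Fintype V] [DecidableEq V] [DecidableEq W] {G : SimpleGraph V}
    (p : V → W) (T : Finset W) (h : ∀ u v, SatEdge G u v → p u = p v ∧ p u ∈ T) :
    satCount G ≤ ∑ w ∈ T, (#{x | p x = w}).choose 2 := by
  calc satCount G
      ≤ #(T.biUnion fun w => ({x | p x = w} : Finset V).offDiag.image Sym2.mk.uncurry) := by
        rw [satCount, ← Set.ncard_coe_finset]
        refine Set.ncard_le_ncard ?_
        rintro _ ⟨u, v, rfl, huv⟩
        obtain ⟨hp, hT⟩ := h u v huv
        simp only [coe_biUnion, Set.mem_iUnion, mem_coe]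
        exact ⟨p u, hT, mem_image_of_mem _ (mem_offDiag.2 ⟨by simp, by simp [hp], huv.1⟩)⟩
    _ ≤ ∑ w ∈ T, #(({x | p x = w} : Finset V).offDiag.image Sym2.mk.uncurry) := card_biUnion_le
    _ = ∑ w ∈ T, (#{x | p x = w}).choose 2 := sum_congr rfl fun _ _ => Sym2.card_image_offDiag _

theorem satCount_comap_le [Fintype V] [DecidableEq V] [DecidableEq W] {H : SimpleGraph W}
    (hH : H.CliqueFree 4) (φ : V → W) (T : Finset W)
    (hT : ∀ a b x y, H.Adj x y → H.Adj a x → H.Adj a y → H.Adj b x → H.Adj b y →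
      ¬ H.Adj a b → a = b ∧ a ∈ T) :
    satCount (H.comap φ) ≤ ∑ w ∈ T, (#{x | φ x = w}).choose 2 :=
  satCount_le_sum_choose φ T fun _ _ h => by
    obtain ⟨x, y, hxy, hux, huy, hvx, hvy⟩ :=
      h.exists_adj_of_cliqueFree (hH.of_hom (Hom.comap φ H))
    exact hT _ _ _ _ hxy hux huy hvx hvy h.2.1

end SatEdge

def baseGraph : SimpleGraph (Fin 7) := fromRel fun i j =>
  (i, j) ∈ [(0, 1), (0, 2), (1, 2), (1, 3), (1, 4), (2, 5), (2, 6), (3, 6), (4, 5), (4, 6)]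

instance : DecidableRel baseGraph.Adj := fun _ _ => inferInstanceAs (Decidable (_ ∧ _))

theorem baseGraph_cliqueFree : baseGraph.CliqueFree 4 := fun t ht => by
  obtain ⟨a, b, c, d, hab, hac, had, hbc, hbd, hcd, rfl⟩ := card_eq_four.1 ht.card_eq
  have : ∀ a b c d : Fin 7, baseGraph.Adj a b → baseGraph.Adj a c → baseGraph.Adj a d →
      baseGraph.Adj b c → baseGraph.Adj b d → baseGraph.Adj c d → False := by
    decide
  exact this a b c d (ht.1 (by simp) (by simp) hab) (ht.1 (by simp) (by simp) hac)
    (ht.1 (by simp) (by simp) had) (ht.1 (by simp) (by simp) hbc)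
    (ht.1 (by simp) (by simp) hbd) (ht.1 (by simp) (by simp) hcd)

theorem baseGraph_eq_of_adj_commonNeighbors : ∀ a b x y : Fin 7, baseGraph.Adj x y →
    baseGraph.Adj a x → baseGraph.Adj a y → baseGraph.Adj b x → baseGraph.Adj b y →
    ¬ baseGraph.Adj a b → a = b ∧ a ∈ ({0, 1, 2} : Finset (Fin 7)) := by
  decide

def blockSize (k : ℕ) : Fin 7 → ℕ :=
  ![4 * k + 5, 16 * k + 16, 16 * k + 16, k, 14 * k + 15, 1, 15 * k + 13]

theorem sum_blockSize (k : ℕ) : ∑ i, blockSize k i = 66 * (k + 1) := by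
  simp [Fin.sum_univ_seven, blockSize]
  ring

section Blowup

variable {V : Type*} [Fintype V] {k : ℕ} {φ : V → Fin 7}

theorem card_edgeFinset_blowup (hφ : ∀ i, #{x | φ x = i} = blockSize k i) :
    #(baseGraph.comap φ).edgeFinset = 1089 * (k + 1) ^ 2 + 1 := by
  have h := two_mul_card_edgeFinset_comap baseGraph φ
  simp +decide [hφ, Fin.sum_univ_seven, blockSize] at h
  exact Nat.eq_of_mul_eq_mul_left two_pos (h.trans (by ring))

theorem satCount_blowup_le [DecidableEq V] (hφ : ∀ i, #{x | φ x = i} = blockSize k i) :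
    satCount (baseGraph.comap φ) ≤ (4 * k + 5).choose 2 + 2 * (16 * k + 16).choose 2 := by
  simpa [hφ, blockSize, two_mul] using
    satCount_comap_le baseGraph_cliqueFree φ _ baseGraph_eq_of_adj_commonNeighbors

end Blowup

theorem stmt1 (n : ℕ) (hn : 66 ≤ n) (h66 : 66 ∣ n) :
    ∃ G : SimpleGraph (Fin n), G.CliqueFree 4 ∧
      G.edgeSet.ncard = n ^ 2 / 4 + 1 ∧
      (satCount G : ℝ) ≤ 2 * (n : ℝ) ^ 2 / 33 - 7 * n / 33 := by
  obtain ⟨k, rfl⟩ : ∃ k, n = 66 * (k + 1) := ⟨n / 66 - 1, by omega⟩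
  obtain ⟨φ, hφ⟩ := exists_card_fiber_eq (blockSize k) (sum_blockSize k)
  refine ⟨baseGraph.comap φ, baseGraph_cliqueFree.of_hom (Hom.comap φ baseGraph), ?_, ?_⟩
  · rw [← coe_edgeFinset, Set.ncard_coe_finset, card_edgeFinset_blowup hφ]
    have h4 : (66 * (k + 1)) ^ 2 = 4 * (1089 * (k + 1) ^ 2) := by ring
    rw [h4, Nat.mul_div_cancel_left _ four_pos]
  · calc (satCount (baseGraph.comap φ) : ℝ)
        ≤ ((4 * k + 5).choose 2 + 2 * (16 * k + 16).choose 2 : ℕ) := by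
          exact_mod_cast satCount_blowup_le hφ
      _ = 2 * ((66 * (k + 1) : ℕ) : ℝ) ^ 2 / 33 - 7 * (66 * (k + 1) : ℕ) / 33 := by
          push_cast [Nat.cast_choose_two]
          ring
end

section
/- Let G be a K4-free simple graph, let 𝒯 be a maximum triangle packing of G, and let T = {x, y, z} ∈ 𝒯. Let A, B, C be the sets of vertices of G' adjacent in G to both x and y, to both y and z, and to both x and z, respectively, and suppose A, B, C are all nonempty. Let s be the number of edges of G between {x, y, z} and V(G'). Then the number of K4-saturating edges of G with both endpoints in V(G'), plus the number of pairs of distinct nonadjacent vertices of G', is at least s²/6 − s/2. -/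
open SimpleGraph

/-- A triangle packing: a family of pairwise vertex-disjoint triangles of `G`. -/
def IsTrianglePacking {V : Type*} (G : SimpleGraph V) (𝒯 : Finset (Finset V)) : Prop :=
  (∀ T ∈ 𝒯, G.IsNClique 3 T) ∧ (𝒯 : Set (Finset V)).Pairwise Disjoint

/-- A maximum triangle packing: no triangle packing of `G` has more triangles. -/
def IsMaxTrianglePacking {V : Type*} (G : SimpleGraph V) (𝒯 : Finset (Finset V)) : Prop :=
  IsTrianglePacking G 𝒯 ∧ ∀ 𝒮 : Finset (Finset V), IsTrianglePacking G 𝒮 → 𝒮.card ≤ 𝒯.card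

/-!
Let `W = V(𝒯)` and, for `t ∈ T`, let `Nₜ` be the set of neighbours of `t` outside `W`. If some
`w ∉ W` is adjacent to `y` and `z`, then `N_x` is independent: an edge `uv` inside it would let
`{x, u, v}` and `{y, z, w}` replace `T` in `𝒯` (and `w ∉ {u, v}` since `G` is `K₄`-free).
So every pair of distinct vertices of some `Nₜ` is a nonadjacent pair of `G'`, a pair lying in
two of them, `Nₛ` and `Nₜ`, is `K₄`-saturating because `st` is an edge, and no vertex lies in all
three. Hence `∑ₜ C(|Nₜ|, 2)` is at most the right-hand side, and since `∑ₜ |Nₜ| = s`, convexity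
gives `∑ₜ C(|Nₜ|, 2) ≥ s²/6 - s/2`.
-/

open Finset

theorem Sym2.mk_mem_image_offDiag_iff {α : Type*} [DecidableEq α] {s : Finset α} {u v : α} :
    s(u, v) ∈ s.offDiag.image Sym2.mk.uncurry ↔ u ≠ v ∧ u ∈ s ∧ v ∈ s := by
  rw [← Sym2.filter_image_mk_not_isDiag, ← sym2_eq_image]
  simp [and_comm]

-- With no element in all three sets the pairwise intersections are disjoint, so inclusion–exclusion
-- gives `#P₁ + #P₂ + #P₃ = #(P₁ ∪ P₂ ∪ P₃) + #(P₁ ∩ P₂ ∪ P₁ ∩ P₃ ∪ P₂ ∩ P₃)`.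
theorem Finset.card_add_card_add_card_le_of_inter_eq_empty {α : Type*} [DecidableEq α]
    {P₁ P₂ P₃ N M : Finset α}
    (hP : P₁ ∩ P₂ ∩ P₃ = ∅) (hN : P₁ ∪ P₂ ∪ P₃ ⊆ N)
    (h₁₂ : P₁ ∩ P₂ ⊆ M) (h₁₃ : P₁ ∩ P₃ ⊆ M) (h₂₃ : P₂ ∩ P₃ ⊆ M) :
    #P₁ + #P₂ + #P₃ ≤ #M + #N := by
  have e₁ := card_union_add_card_inter P₁ P₂
  have e₂ := card_union_add_card_inter (P₁ ∪ P₂) P₃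
  have e₃ := card_union_add_card_inter (P₁ ∩ P₂) ((P₁ ∪ P₂) ∩ P₃)
  have h₀ : P₁ ∩ P₂ ∩ ((P₁ ∪ P₂) ∩ P₃) = ∅ := by
    rw [← hP]; ext; simp only [mem_inter, mem_union]; tauto
  have hM : P₁ ∩ P₂ ∪ (P₁ ∪ P₂) ∩ P₃ ⊆ M := by
    rw [union_inter_distrib_right]
    exact union_subset h₁₂ (union_subset h₁₃ h₂₃)
  rw [h₀, card_empty] at e₃
  have := card_le_card hN
  have := card_le_card hM
  omega

theorem ncard_setOf_fst_mem_snd_mem {α β : Type*} [DecidableEq α] [DecidableEq β]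
    (T : Finset α) (F : α → Finset β) :
    {p : α × β | p.1 ∈ T ∧ p.2 ∈ F p.1}.ncard = ∑ t ∈ T, #(F t) := by
  have : {p : α × β | p.1 ∈ T ∧ p.2 ∈ F p.1} = ↑(T.biUnion fun t => {t} ×ˢ F t) := by
    ext ⟨a, b⟩; simp [and_comm]
  rw [this, Set.ncard_coe_finset, card_biUnion]
  · simp
  · intro t _ t' _ h
    simp [Finset.disjoint_left, h.symm]

theorem sq_div_six_sub_div_two_le_sum_choose_two (a b c : ℕ) :
    ((a + b + c : ℕ) : ℝ) ^ 2 / 6 - ((a + b + c : ℕ) : ℝ) / 2 ≤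
      (a.choose 2 + b.choose 2 + c.choose 2 : ℕ) := by
  push_cast [Nat.cast_choose_two]
  nlinarith [sq_nonneg ((a : ℝ) - b), sq_nonneg ((b : ℝ) - c), sq_nonneg ((a : ℝ) - c)]

section
variable {V : Type*} {G : SimpleGraph V}

theorem SimpleGraph.is4Clique_of_adj [DecidableEq V] {a b c d : V} (hab : G.Adj a b)
    (hac : G.Adj a c) (had : G.Adj a d) (hbc : G.Adj b c) (hbd : G.Adj b d) (hcd : G.Adj c d) :
    G.IsNClique 4 {a, b, c, d} :=
  (is3Clique_triple_iff.2 ⟨hbc, hbd, hcd⟩).insert (by simp [hab, hac, had])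

theorem satEdge_of_adj_of_adj {a b u v : V} (hab : G.Adj a b) (hau : G.Adj a u)
    (hav : G.Adj a v) (hbu : G.Adj b u) (hbv : G.Adj b v) (hne : u ≠ v) (huv : ¬G.Adj u v) :
    SatEdge G u v := by
  classical
  have hG : G ≤ G ⊔ fromEdgeSet {s(u, v)} := le_sup_left
  exact ⟨hne, huv, fun h => h _ (is4Clique_of_adj (hG hab) (hG hau) (hG hav) (hG hbu) (hG hbv)
    (Or.inr ((fromEdgeSet_adj _).2 ⟨rfl, hne⟩)))⟩

variable [DecidableEq V]

-- Otherwise replacing `T` by `S₁` and `S₂` would give a larger packing.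
theorem IsMaxTrianglePacking.not_disjoint {𝒯 : Finset (Finset V)} (h𝒯 : IsMaxTrianglePacking G 𝒯)
    {T S₁ S₂ : Finset V} (hT : T ∈ 𝒯) (hS₁ : G.IsNClique 3 S₁) (hS₂ : G.IsNClique 3 S₂)
    (hS₁T : ∀ v ∈ S₁, v ∈ T ∨ v ∉ 𝒯.sup id) (hS₂T : ∀ v ∈ S₂, v ∈ T ∨ v ∉ 𝒯.sup id) :
    ¬Disjoint S₁ S₂ := by
  intro h₁₂
  have hfar : ∀ S, (∀ v ∈ S, v ∈ T ∨ v ∉ 𝒯.sup id) → ∀ R ∈ 𝒯.erase T, Disjoint S R := by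
    intro S hS R hR
    obtain ⟨hRT, hR⟩ := mem_erase.1 hR
    refine disjoint_left.2 fun v hvS hvR => ?_
    rcases hS v hvS with hvT | hv
    · exact disjoint_left.1 (h𝒯.1.2 hT hR hRT.symm) hvT hvR
    · exact hv (mem_sup.2 ⟨R, hR, hvR⟩)
  have hne : ∀ S R, G.IsNClique 3 S → Disjoint S R → S ≠ R := by
    rintro S R hS hSR rfl
    simpa [hS.card_eq] using congrArg card (disjoint_self_iff_empty S |>.1 hSR)
  have h₂ : S₂ ∉ 𝒯.erase T := fun h => hne _ _ hS₂ (hfar S₂ hS₂T S₂ h) rfl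
  have h₁ : S₁ ∉ insert S₂ (𝒯.erase T) := by
    rw [mem_insert, not_or]
    exact ⟨hne _ _ hS₁ h₁₂, fun h => hne _ _ hS₁ (hfar S₁ hS₁T S₁ h) rfl⟩
  have hpack : IsTrianglePacking G (insert S₁ (insert S₂ (𝒯.erase T))) := by
    refine ⟨?_, ?_⟩
    · intro S hS
      simp only [mem_insert] at hS
      rcases hS with rfl | rfl | hS
      exacts [hS₁, hS₂, h𝒯.1.1 S (mem_of_mem_erase hS)]
    · simp only [coe_insert]
      refine ((h𝒯.1.2.mono (coe_erase T 𝒯 ▸ Set.sdiff_subset)).insert_of_symm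
        fun R hR _ => hfar S₂ hS₂T R hR).insert_of_symm fun R hR _ => ?_
      rcases hR with rfl | hR
      exacts [h₁₂, hfar S₁ hS₁T R hR]
  have := h𝒯.2 _ hpack
  rw [card_insert_of_notMem h₁, card_insert_of_notMem h₂, card_erase_of_mem hT] at this
  have := card_pos.2 ⟨T, hT⟩
  omega

theorem IsMaxTrianglePacking.isIndepSet_neighborSet_diff (hK4 : G.CliqueFree 4)
    {𝒯 : Finset (Finset V)} (h𝒯 : IsMaxTrianglePacking G 𝒯) {x y z w : V}
    (hT : {x, y, z} ∈ 𝒯) (hw : w ∉ 𝒯.sup id) (hyw : G.Adj y w) (hzw : G.Adj z w) :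
    G.IsIndepSet (G.neighborSet x \ ↑(𝒯.sup id)) := by
  obtain ⟨hxy, hxz, hyz⟩ := is3Clique_triple_iff.1 (h𝒯.1.1 _ hT)
  have hcov : ∀ v ∈ ({x, y, z} : Finset V), v ∈ 𝒯.sup id := fun v hv => mem_sup.2 ⟨_, hT, hv⟩
  simp only [mem_insert, mem_singleton, forall_eq_or_imp, forall_eq] at hcov
  obtain ⟨hx, hy, hz⟩ := hcov
  rintro u ⟨hxu, hu⟩ v ⟨hxv, hv⟩ - huv
  rw [mem_coe] at hu hv
  have hwu : w ≠ u := by rintro rfl; exact hK4 _ (is4Clique_of_adj hxy hxz hxu hyz hyw hzw)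
  have hwv : w ≠ v := by rintro rfl; exact hK4 _ (is4Clique_of_adj hxy hxz hxv hyz hyw hzw)
  refine h𝒯.not_disjoint hT (is3Clique_triple_iff.2 ⟨hxu, hxv, huv⟩)
    (is3Clique_triple_iff.2 ⟨hyz, hyw, hzw⟩) ?_ ?_ ?_
  · simp [hu, hv, -mem_sup]
  · simp [hw, -mem_sup]
  · simp only [disjoint_insert_left, disjoint_insert_right, disjoint_singleton, mem_insert,
      mem_singleton]
    refine ⟨?_, ?_, ne_of_mem_of_not_mem hx hw, hwu.symm, hwv.symm⟩ <;>
      rintro (rfl | rfl | rfl) <;> simp_all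
end

section
variable {V : Type*} {G : SimpleGraph V} [Fintype V] [DecidableEq V] [DecidableRel G.Adj]

theorem sum_choose_two_card_neighborFinset_sdiff_le (hK4 : G.CliqueFree 4) (W : Finset V)
    {x y z : V} (hxy : G.Adj x y) (hxz : G.Adj x z) (hyz : G.Adj y z)
    (hx : G.IsIndepSet (G.neighborSet x \ ↑W)) (hy : G.IsIndepSet (G.neighborSet y \ ↑W))
    (hz : G.IsIndepSet (G.neighborSet z \ ↑W)) :
    (G.neighborFinset x \ W).card.choose 2 + (G.neighborFinset y \ W).card.choose 2 +
        (G.neighborFinset z \ W).card.choose 2 ≤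
      {e : Sym2 V | ∃ u v, e = s(u, v) ∧ SatEdge G u v ∧ u ∉ W ∧ v ∉ W}.ncard +
      {e : Sym2 V | ∃ u v, e = s(u, v) ∧ u ≠ v ∧ ¬ G.Adj u v ∧ u ∉ W ∧ v ∉ W}.ncard := by
  set S := {e : Sym2 V | ∃ u v, e = s(u, v) ∧ SatEdge G u v ∧ u ∉ W ∧ v ∉ W}
  set N := {e : Sym2 V | ∃ u v, e = s(u, v) ∧ u ≠ v ∧ ¬ G.Adj u v ∧ u ∉ W ∧ v ∉ W}
  set P : V → Finset (Sym2 V) := fun t => (G.neighborFinset t \ W).offDiag.image Sym2.mk.uncurry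
  have hP : ∀ t u v, s(u, v) ∈ P t ↔ u ≠ v ∧ G.Adj t u ∧ u ∉ W ∧ G.Adj t v ∧ v ∉ W := by
    intro t u v
    simp only [P, Sym2.mk_mem_image_offDiag_iff, mem_sdiff, mem_neighborFinset, and_assoc]
  have hnon : ∀ {t}, G.IsIndepSet (G.neighborSet t \ ↑W) → P t ⊆ N.toFinite.toFinset := by
    intro t ht e he
    induction e using Sym2.ind with
    | h u v =>
      obtain ⟨hne, htu, hu, htv, hv⟩ := (hP t u v).1 he
      exact N.toFinite.mem_toFinset.2 ⟨u, v, rfl, hne, ht ⟨htu, hu⟩ ⟨htv, hv⟩ hne, hu, hv⟩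
  have hsat : ∀ {a b}, G.Adj a b → G.IsIndepSet (G.neighborSet a \ ↑W) →
      P a ∩ P b ⊆ S.toFinite.toFinset := by
    intro a b hab ha e he
    induction e using Sym2.ind with
    | h u v =>
      rw [mem_inter, hP, hP] at he
      obtain ⟨⟨hne, hau, hu, hav, hv⟩, -, hbu, -, hbv, -⟩ := he
      exact S.toFinite.mem_toFinset.2 ⟨u, v, rfl,
        satEdge_of_adj_of_adj hab hau hav hbu hbv hne (ha ⟨hau, hu⟩ ⟨hav, hv⟩ hne), hu, hv⟩
  have hno3 : P x ∩ P y ∩ P z = ∅ := by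
    refine eq_empty_of_forall_notMem fun e he => ?_
    induction e using Sym2.ind with
    | h u v =>
      rw [mem_inter, mem_inter, hP, hP, hP] at he
      obtain ⟨⟨⟨-, hxu, -⟩, -, hyu, -⟩, -, hzu, -⟩ := he
      exact hK4 _ (is4Clique_of_adj hxy hxz hxu hyz hyu hzu)
  rw [← Sym2.card_image_offDiag, ← Sym2.card_image_offDiag, ← Sym2.card_image_offDiag,
    Set.ncard_eq_toFinset_card S S.toFinite, Set.ncard_eq_toFinset_card N N.toFinite]
  exact card_add_card_add_card_le_of_inter_eq_empty hno3
    (union_subset (union_subset (hnon hx) (hnon hy)) (hnon hz))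
    (hsat hxy hx) (hsat hxz hx) (hsat hyz hy)
end

theorem stmt8 {V : Type*} [Fintype V] [DecidableEq V] (G : SimpleGraph V) (hK4 : G.CliqueFree 4)
    (𝒯 : Finset (Finset V)) (hpack : IsMaxTrianglePacking G 𝒯)
    (x y z : V) (hT : ({x, y, z} : Finset V) ∈ 𝒯)
    -- A, B, C : common neighborhoods in G' of the three edges of T
    (A B C : Set V)
    (hA : A = {v | v ∉ 𝒯.sup id ∧ G.Adj x v ∧ G.Adj y v})
    (hB : B = {v | v ∉ 𝒯.sup id ∧ G.Adj y v ∧ G.Adj z v})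
    (hC : C = {v | v ∉ 𝒯.sup id ∧ G.Adj x v ∧ G.Adj z v})
    (hAne : A.Nonempty) (hBne : B.Nonempty) (hCne : C.Nonempty)
    -- s : the number of edges of G between {x, y, z} and V(G')
    (s : ℕ)
    (hs : s = {p : V × V | p.1 ∈ ({x, y, z} : Set V) ∧ p.2 ∉ 𝒯.sup id ∧ G.Adj p.1 p.2}.ncard) :
    (s : ℝ) ^ 2 / 6 - (s : ℝ) / 2 ≤
      -- number of K₄-saturating edges with both endpoints in V(G')
      ({e : Sym2 V | ∃ u v, e = s(u, v) ∧ SatEdge G u v ∧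
          u ∉ 𝒯.sup id ∧ v ∉ 𝒯.sup id}.ncard : ℝ) +
      -- number of pairs of distinct nonadjacent vertices of G'
      ({e : Sym2 V | ∃ u v, e = s(u, v) ∧ u ≠ v ∧ ¬ G.Adj u v ∧
          u ∉ 𝒯.sup id ∧ v ∉ 𝒯.sup id}.ncard : ℝ) := by
  classical
  set W := 𝒯.sup id
  obtain ⟨hxy, hxz, hyz⟩ := is3Clique_triple_iff.1 (hpack.1.1 _ hT)
  obtain ⟨a, haW, hxa, hya⟩ := hA ▸ hAne
  obtain ⟨b, hbW, hyb, hzb⟩ := hB ▸ hBne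
  obtain ⟨c, hcW, hxc, hzc⟩ := hC ▸ hCne
  have hrot : ∀ a b c : V, ({a, b, c} : Finset V) = {b, c, a} := by
    intro a b c; ext; simp only [mem_insert, mem_singleton]; tauto
  have hT' : {y, z, x} ∈ 𝒯 := hrot x y z ▸ hT
  have hx := hpack.isIndepSet_neighborSet_diff hK4 hT hbW hyb hzb
  have hy := hpack.isIndepSet_neighborSet_diff hK4 hT' hcW hzc hxc
  have hz := hpack.isIndepSet_neighborSet_diff hK4 (hrot y z x ▸ hT') haW hxa hya
  have hs' : s = (G.neighborFinset x \ W).card + (G.neighborFinset y \ W).card +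
      (G.neighborFinset z \ W).card := by
    have : {p : V × V | p.1 ∈ ({x, y, z} : Set V) ∧ p.2 ∉ W ∧ G.Adj p.1 p.2} =
        {p | p.1 ∈ ({x, y, z} : Finset V) ∧ p.2 ∈ G.neighborFinset p.1 \ W} := by
      ext; simp [and_comm]
    rw [hs, this, ncard_setOf_fst_mem_snd_mem _ fun t => G.neighborFinset t \ W,
      sum_insert (by simp [hxy.ne, hxz.ne]), sum_pair hyz.ne, add_assoc]
  calc (s : ℝ) ^ 2 / 6 - (s : ℝ) / 2
      ≤ ((G.neighborFinset x \ W).card.choose 2 + (G.neighborFinset y \ W).card.choose 2 +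
          (G.neighborFinset z \ W).card.choose 2 : ℕ) :=
        hs' ▸ sq_div_six_sub_div_two_le_sum_choose_two _ _ _
    _ ≤ _ := by
        exact_mod_cast sum_choose_two_card_neighborFinset_sdiff_le hK4 W hxy hxz hyz hx hy hz
end

section
/- If G is a K4-free simple graph and T_1, …, T_m are pairwise vertex-disjoint triangles in G, then the number of edges of G with both endpoints in V(T_1) ∪ ⋯ ∪ V(T_m) is at most 3m². -/
/-!
In a `K₄`-free graph a vertex is adjacent to at most two vertices of any triangle, so every vertex
has at most `2m` neighbours in the union `U` of the `m` triangles. Since `|U| ≤ 3m`, the handshake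
lemma for the edges inside `U` gives `2e ≤ 3m · 2m`.
-/

open SimpleGraph Finset

namespace SimpleGraph

variable {V : Type*} {G : SimpleGraph V}

theorem IsNClique.card_filter_adj_lt [DecidableEq V] [DecidableRel G.Adj] {n : ℕ} {s : Finset V}
    (hG : G.CliqueFree (n + 1)) (hs : G.IsNClique n s) (v : V) : #{w ∈ s | G.Adj v w} < n := by
  by_contra! h
  have hall : {w ∈ s | G.Adj v w} = s :=
    eq_of_subset_of_card_le (filter_subset _ _) (hs.card_eq ▸ h)
  exact hG _ (hs.insert fun w hw => (mem_filter.mp (hall ▸ hw)).2)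

variable (G) in
theorem two_mul_ncard_edgeSet_within_le [Fintype V] [DecidableRel G.Adj] (U : Finset V) (d : ℕ)
    (hd : ∀ v ∈ U, #{w ∈ U | G.Adj v w} ≤ d) :
    2 * {e ∈ G.edgeSet | ∀ v ∈ e, v ∈ (U : Set V)}.ncard ≤ #U * d := by
  classical
  set E := {e ∈ G.edgeSet | ∀ v ∈ e, v ∈ (U : Set V)}
  set H := fromEdgeSet E
  have hH : H.edgeSet = E := by
    rw [edgeSet_fromEdgeSet, sdiff_eq_left]
    exact Set.disjoint_left.mpr fun e he => G.not_isDiag_of_mem_edgeSet he.1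
  have hnbr : ∀ v, H.neighborFinset v ⊆ {w ∈ U | G.Adj v w} := by
    intro v w hw
    rw [mem_neighborFinset, fromEdgeSet_adj] at hw
    exact mem_filter.mpr ⟨hw.1.2 w (Sym2.mem_mk_right v w), hw.1.1⟩
  have hzero : ∀ v ∉ U, H.degree v = 0 := by
    intro v hv
    rw [← card_neighborFinset_eq_degree, card_eq_zero, eq_empty_iff_forall_notMem]
    intro w hw
    rw [mem_neighborFinset, fromEdgeSet_adj] at hw
    exact hv (hw.1.2 v (Sym2.mem_mk_left v w))
  calc 2 * E.ncard
    _ = 2 * #H.edgeFinset := by rw [← Set.ncard_coe_finset, coe_edgeFinset, hH]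
    _ = ∑ v ∈ U, H.degree v := by
      rw [sum_subset (subset_univ U) fun v _ hv => hzero v hv]
      convert (H.sum_degrees_eq_twice_card_edges).symm
    _ ≤ #U * d := sum_le_card_nsmul _ _ _ fun v hv =>
      (card_le_card (hnbr v)).trans (hd v hv)

end SimpleGraph

theorem stmt10_general {V : Type*} [Fintype V] (G : SimpleGraph V) (hK4 : G.CliqueFree 4)
    (m : ℕ) (T : Fin m → Finset V) (hT : ∀ i, G.IsNClique 3 (T i)) :
    {e ∈ G.edgeSet | ∀ v ∈ e, v ∈ ⋃ i, ((T i : Finset V) : Set V)}.ncard ≤ 3 * m ^ 2 := by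
  classical
  have hU : ⋃ i, ((T i : Finset V) : Set V) = ((univ.biUnion T : Finset V) : Set V) := by simp
  have hcard : #(univ.biUnion T) ≤ m * 3 := by
    simpa using card_biUnion_le_card_mul univ T 3 fun i _ => (hT i).card_eq.le
  have hdeg : ∀ v, #{w ∈ univ.biUnion T | G.Adj v w} ≤ m * 2 := by
    intro v
    rw [filter_biUnion]
    simpa using card_biUnion_le_card_mul univ _ 2 fun i _ =>
      Nat.le_of_lt_succ ((hT i).card_filter_adj_lt hK4 v)
  have hedges := G.two_mul_ncard_edgeSet_within_le _ _ fun v _ => hdeg v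
  rw [hU]
  nlinarith

theorem stmt10 {V : Type*} [Fintype V] (G : SimpleGraph V) (hK4 : G.CliqueFree 4)
    (m : ℕ) (T : Fin m → Finset V) (hT : ∀ i, G.IsNClique 3 (T i))
    (hdisj : ∀ i j, i ≠ j → Disjoint (T i) (T j)) :
    {e ∈ G.edgeSet | ∀ v ∈ e, v ∈ ⋃ i, ((T i : Finset V) : Set V)}.ncard ≤ 3 * m ^ 2 :=
  stmt10_general G hK4 m T hT
end

section
/- For every integer n ≥ 4, there exists a K4-free simple graph F on n vertices with exactly 2n − 3 edges such that every pair of distinct nonadjacent vertices of F is a K4-saturating edge. -/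
open SimpleGraph

/-!
The graph `F` is the join of `K₂` with an independent set: two adjacent hubs joined to every
other vertex. A clique contains at most one non-hub, so `F` has no `K₄`; two distinct non-hubs
are exactly the nonadjacent pairs, and together with the hubs they span a `K₄` once joined.
Every non-hub has degree `2` and each hub degree `n - 1`, so the handshake lemma gives
`2 |E(F)| = 2 (n - 2) + 2 (n - 1)`.
-/

open Finset

namespace SimpleGraph

variable {V : Type*}

def hubGraph (s : Finset V) : SimpleGraph V :=
  fromRel fun x y => x ∈ s ∨ y ∈ s

variable {s : Finset V} {u v : V}

theorem hubGraph_adj : (hubGraph s).Adj u v ↔ u ≠ v ∧ (u ∈ s ∨ v ∈ s) := by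
  simp only [hubGraph, fromRel_adj, or_comm (a := v ∈ s), or_self]

theorem notMem_of_not_hubGraph_adj (huv : u ≠ v) (h : ¬ (hubGraph s).Adj u v) :
    u ∉ s ∧ v ∉ s := by
  rw [hubGraph_adj] at h
  tauto

theorem cliqueFree_hubGraph (s : Finset V) : (hubGraph s).CliqueFree (#s + 2) := by
  classical
  rintro t ⟨ht, hcard⟩
  have hin : #(t.filter (· ∈ s)) ≤ #s := card_le_card fun x hx => (mem_filter.1 hx).2
  have hout : #(t.filter (· ∉ s)) ≤ 1 := by
    refine card_le_one.2 fun x hx y hy => by_contra fun hxy => ?_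
    rw [mem_filter] at hx hy
    exact ((hubGraph_adj.1 (ht hx.1 hy.1 hxy)).2.elim hx.2 hy.2)
  have := card_filter_add_card_filter_not (s := t) (· ∈ s)
  omega

theorem isClique_sup_edge_hubGraph :
    (hubGraph s ⊔ fromEdgeSet {s(u, v)}).IsClique (insert u (insert v (s : Set V))) := by
  intro x hx y hy hxy
  by_cases hxys : x ∈ s ∨ y ∈ s
  · exact Or.inl (hubGraph_adj.2 ⟨hxy, hxys⟩)
  · right
    simp only [Set.mem_insert_iff, mem_coe] at hx hy
    rw [fromEdgeSet_adj, Set.mem_singleton_iff, Sym2.eq_iff]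
    grind

theorem not_cliqueFree_sup_edge_hubGraph (huv : u ≠ v) (hu : u ∉ s) (hv : v ∉ s) :
    ¬ (hubGraph s ⊔ fromEdgeSet {s(u, v)}).CliqueFree (#s + 2) := by
  classical
  refine fun h => h (insert u (insert v s)) ⟨?_, ?_⟩
  · simpa only [coe_insert] using isClique_sup_edge_hubGraph
  · rw [card_insert_of_notMem (by simp [huv, hu]), card_insert_of_notMem hv]

variable [Fintype V] [DecidableEq V]

instance : DecidableRel (hubGraph s).Adj := fun _ _ => decidable_of_iff' _ hubGraph_adj

theorem degree_hubGraph_of_mem (hv : v ∈ s) :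
    (hubGraph s).degree v = Fintype.card V - 1 := by
  rw [← card_neighborFinset_eq_degree, ← card_univ, ← card_erase_of_mem (mem_univ v)]
  congr 1
  ext w
  simp [hubGraph_adj, hv, eq_comm]

theorem degree_hubGraph_of_notMem (hv : v ∉ s) : (hubGraph s).degree v = #s := by
  rw [← card_neighborFinset_eq_degree]
  congr 1
  ext w
  simp only [mem_neighborFinset, hubGraph_adj, hv, false_or]
  exact ⟨And.right, fun hw => ⟨fun h => hv (h ▸ hw), hw⟩⟩

theorem two_mul_card_edgeFinset_hubGraph :
    2 * #(hubGraph s).edgeFinset = #s * (Fintype.card V - 1) + (Fintype.card V - #s) * #s := by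
  rw [← sum_degrees_eq_twice_card_edges, ← sum_add_sum_compl s, ← card_compl,
    sum_congr rfl fun v hv => degree_hubGraph_of_mem hv,
    sum_congr rfl fun v hv => degree_hubGraph_of_notMem (mem_compl.1 hv), sum_const, sum_const,
    smul_eq_mul, smul_eq_mul]

end SimpleGraph

theorem stmt14 (n : ℕ) (hn : 4 ≤ n) :
    ∃ F : SimpleGraph (Fin n), F.CliqueFree 4 ∧
      F.edgeSet.ncard = 2 * n - 3 ∧
      ∀ u v : Fin n, u ≠ v → ¬ F.Adj u v → SatEdge F u v := by
  let hubs : Finset (Fin n) := {⟨0, by omega⟩, ⟨1, by omega⟩}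
  have hcard : #hubs = 2 := card_pair (by simp [Fin.ext_iff])
  have hclique : #hubs + 2 = 4 := by omega
  refine ⟨hubGraph hubs, hclique ▸ cliqueFree_hubGraph hubs, ?_, fun u v huv h => ⟨huv, h, ?_⟩⟩
  · have hedges := two_mul_card_edgeFinset_hubGraph (s := hubs)
    rw [hcard, Fintype.card_fin] at hedges
    rw [← coe_edgeFinset, Set.ncard_coe_finset]
    omega
  · obtain ⟨hu, hv⟩ := notMem_of_not_hubGraph_adj huv h
    exact hclique ▸ not_cliqueFree_sup_edge_hubGraph huv hu hv
end

section
/- Let G be a K4-free simple graph, let 𝒯 be a maximum triangle packing of G, and let T = {x, y, z} ∈ 𝒯. If some vertex of G' is adjacent in G to both y and z, then the set of vertices of G' that are adjacent to x is an independent set in G. -/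
open SimpleGraph

/-!
If two adjacent vertices `u, v` of `G'` were both adjacent to `x`, and `w ∈ G'` is adjacent to
`y` and `z`, then `w ∉ {u, v}` because `G` is `K₄`-free, so `{x, u, v}` and `{w, y, z}` are disjoint
triangles. Replacing `{x, y, z}` by these two triangles gives a larger packing.
-/

open Finset

section

variable {V : Type*} [DecidableEq V] {G : SimpleGraph V}

theorem SimpleGraph.CliqueFree.not_adj_of_adj_of_adj (hG : G.CliqueFree 4) {x y z u : V}
    (hxyz : G.IsNClique 3 {x, y, z}) (huy : G.Adj u y) (huz : G.Adj u z) : ¬ G.Adj u x := by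
  intro hux
  refine hG _ (hxyz.insert (a := u) fun b hb => ?_)
  simp only [mem_insert, mem_singleton] at hb
  rcases hb with rfl | rfl | rfl <;> assumption

variable {𝒯 : Finset (Finset V)} {T A B : Finset V}

theorem disjoint_of_mem_erase_of_disjoint_sdiff_sup
    (h𝒯 : (𝒯 : Set (Finset V)).Pairwise Disjoint) (hT : T ∈ 𝒯)
    (hA : Disjoint (A \ T) (𝒯.sup id)) : ∀ S ∈ 𝒯.erase T, Disjoint A S := by
  intro S hS
  obtain ⟨hST, hS⟩ := mem_erase.1 hS
  rw [Finset.disjoint_left]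
  intro a haA haS
  by_cases haT : a ∈ T
  · exact Finset.disjoint_left.1 (h𝒯 hT hS hST.symm) haT haS
  · exact Finset.disjoint_left.1 hA (mem_sdiff.2 ⟨haA, haT⟩) (le_sup (f := id) hS haS)

theorem IsTrianglePacking.exchange (h : IsTrianglePacking G 𝒯) (hT : T ∈ 𝒯)
    (hA : G.IsNClique 3 A) (hB : G.IsNClique 3 B) (hAB : Disjoint A B)
    (hAT : Disjoint (A \ T) (𝒯.sup id)) (hBT : Disjoint (B \ T) (𝒯.sup id)) :
    IsTrianglePacking G (insert A (insert B (𝒯.erase T))) := by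
  have hdisj {C} (hC : Disjoint (C \ T) (𝒯.sup id)) : ∀ S ∈ 𝒯.erase T, Disjoint C S :=
    disjoint_of_mem_erase_of_disjoint_sdiff_sup h.2 hT hC
  constructor
  · intro S hS
    simp only [mem_insert] at hS
    rcases hS with rfl | rfl | hS
    exacts [hA, hB, h.1 S (mem_of_mem_erase hS)]
  · simp only [coe_insert, Set.pairwise_insert_of_symm, Set.mem_insert_iff, mem_coe]
    refine ⟨⟨h.2.mono (by simp), fun S hS _ => hdisj hBT S hS⟩, ?_⟩
    rintro S (rfl | hS) -
    exacts [hAB, hdisj hAT S hS]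

theorem card_insert_insert_erase_of_disjoint (hT : T ∈ 𝒯) (hA : A.Nonempty) (hB : B.Nonempty)
    (hAB : Disjoint A B) (hA𝒯 : ∀ S ∈ 𝒯.erase T, Disjoint A S)
    (hB𝒯 : ∀ S ∈ 𝒯.erase T, Disjoint B S) :
    #(insert A (insert B (𝒯.erase T))) = #𝒯 + 1 := by
  have hBnot : B ∉ 𝒯.erase T := fun hB' => hB.ne_empty (disjoint_self.1 (hB𝒯 B hB'))
  have hAnot : A ∉ insert B (𝒯.erase T) := by
    rw [mem_insert]
    rintro (rfl | hA')
    exacts [hA.ne_empty (disjoint_self.1 hAB), hA.ne_empty (disjoint_self.1 (hA𝒯 A hA'))]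
  rw [card_insert_of_notMem hAnot, card_insert_of_notMem hBnot, card_erase_of_mem hT]
  have := card_pos.2 ⟨T, hT⟩
  omega

theorem IsMaxTrianglePacking.not_exchange (h : IsMaxTrianglePacking G 𝒯) (hT : T ∈ 𝒯)
    (hA : G.IsNClique 3 A) (hB : G.IsNClique 3 B) (hAB : Disjoint A B)
    (hAT : Disjoint (A \ T) (𝒯.sup id)) (hBT : Disjoint (B \ T) (𝒯.sup id)) : False := by
  have hle := h.2 _ (h.1.exchange hT hA hB hAB hAT hBT)
  have nonempty {C : Finset V} (hC : G.IsNClique 3 C) : C.Nonempty := by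
    rw [← card_pos, hC.card_eq]
    norm_num
  rw [card_insert_insert_erase_of_disjoint hT (nonempty hA) (nonempty hB) hAB
    (disjoint_of_mem_erase_of_disjoint_sdiff_sup h.1.2 hT hAT)
    (disjoint_of_mem_erase_of_disjoint_sdiff_sup h.1.2 hT hBT)] at hle
  omega

end

theorem stmt16_general {V : Type*} [DecidableEq V] (G : SimpleGraph V)
    (hK4 : G.CliqueFree 4)
    (𝒯 : Finset (Finset V)) (hpack : IsMaxTrianglePacking G 𝒯)
    (x y z : V) (hT : ({x, y, z} : Finset V) ∈ 𝒯)
    -- some vertex of G' is adjacent to both y and z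
    (hB : ∃ v, v ∉ 𝒯.sup id ∧ G.Adj y v ∧ G.Adj z v) :
    -- the set of vertices of G' adjacent to x is independent
    ∀ u v : V, u ∉ 𝒯.sup id → v ∉ 𝒯.sup id → G.Adj x u → G.Adj x v → ¬ G.Adj u v := by
  rintro u v hu hv hxu hxv huv
  obtain ⟨w, hw, hyw, hzw⟩ := hB
  have hxyz : G.IsNClique 3 {x, y, z} := hpack.1.1 _ hT
  obtain ⟨hxy, hxz, hyz⟩ := is3Clique_triple_iff.1 hxyz
  obtain ⟨hx, hy, hz⟩ : x ∈ 𝒯.sup id ∧ y ∈ 𝒯.sup id ∧ z ∈ 𝒯.sup id := by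
    simpa only [id, insert_subset_iff, singleton_subset_iff] using le_sup (f := id) hT
  have hwu : w ≠ u := by
    rintro rfl
    exact hK4.not_adj_of_adj_of_adj hxyz hyw.symm hzw.symm hxu.symm
  have hwv : w ≠ v := by
    rintro rfl
    exact hK4.not_adj_of_adj_of_adj hxyz hyw.symm hzw.symm hxv.symm
  have hx_ne_y := hxy.ne
  have hx_ne_z := hxz.ne
  refine hpack.not_exchange hT (A := {x, u, v}) (B := {w, y, z})
    (is3Clique_triple_iff.2 ⟨hxu, hxv, huv⟩) (is3Clique_triple_iff.2 ⟨hyw.symm, hzw.symm, hyz⟩)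
    ?_ ?_ ?_ <;>
  · simp only [Finset.disjoint_left, mem_sdiff, mem_insert, mem_singleton]
    grind

theorem stmt16 {V : Type*} [Fintype V] [DecidableEq V] (G : SimpleGraph V)
    (hK4 : G.CliqueFree 4)
    (𝒯 : Finset (Finset V)) (hpack : IsMaxTrianglePacking G 𝒯)
    (x y z : V) (hT : ({x, y, z} : Finset V) ∈ 𝒯)
    -- some vertex of G' is adjacent to both y and z
    (hB : ∃ v, v ∉ 𝒯.sup id ∧ G.Adj y v ∧ G.Adj z v) :
    -- the set of vertices of G' adjacent to x is independent
    ∀ u v : V, u ∉ 𝒯.sup id → v ∉ 𝒯.sup id → G.Adj x u → G.Adj x v → ¬ G.Adj u v :=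
  stmt16_general G hK4 𝒯 hpack x y z hT hB
end
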